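/- arXiv:0810.4117 — 5 statements merged into one kernel-verified Lean document; each statement's English description precedes it below -/
import Mathlib

section
/- Let (X,d,W) be a uniformly convex W-hyperbolic space with modulus of uniform convexity η. Assume r > 0, ε ∈ (0,2] and a,x,y ∈ X satisfy d(x,a) ≤ r, d(y,a) ≤ r and d(x,y) ≥ εr. Then for every λ ∈ [0,1], d((1−λ)x ⊕ λy, a) ≤ (1 − 2λ(1−λ)η(r,ε))·r. -/
open Set Filter Metric Bornology Function

/-- A `W`-hyperbolic space structure on a metric space `X` (Kohlenbach).
`W x y l` denotes `(1-l)x ⊕ l y`. -/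
structure WHyp (X : Type*) [MetricSpace X] where
  W : X → X → ℝ → X
  W1 : ∀ (x y z : X), ∀ l ∈ Set.Icc (0:ℝ) 1,
    dist z (W x y l) ≤ (1 - l) * dist z x + l * dist z y
  W2 : ∀ (x y : X), ∀ l ∈ Set.Icc (0:ℝ) 1, ∀ l' ∈ Set.Icc (0:ℝ) 1,
    dist (W x y l) (W x y l') = |l - l'| * dist x y
  W3 : ∀ (x y : X), ∀ l ∈ Set.Icc (0:ℝ) 1, W x y l = W y x (1 - l)
  W4 : ∀ (x y z w : X), ∀ l ∈ Set.Icc (0:ℝ) 1,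
    dist (W x z l) (W y w l) ≤ (1 - l) * dist x y + l * dist z w

/-- `η` is a modulus of uniform convexity for the `W`-hyperbolic space `H`. -/
def WHyp.UnifConvex {X : Type*} [MetricSpace X] (H : WHyp X) (η : ℝ → ℝ → ℝ) : Prop :=
  (∀ r ε : ℝ, 0 < r → ε ∈ Set.Ioc (0:ℝ) 2 → η r ε ∈ Set.Ioc (0:ℝ) 1) ∧
  (∀ (r ε : ℝ) (a x y : X), 0 < r → ε ∈ Set.Ioc (0:ℝ) 2 →
    dist x a ≤ r → dist y a ≤ r → ε * r ≤ dist x y →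
    dist (H.W x y (1/2)) a ≤ (1 - η r ε) * r)

/-! In a uniformly convex `W`-hyperbolic space, points `p` with `d(x,p) ≤ λ d(x,y)` and
`d(p,y) ≤ (1-λ) d(x,y)` are unique: the midpoint of two such points would be strictly closer
to both `x` and `y`, contradicting the triangle inequality. Hence for `λ ≤ 1/2` the point
`(1-λ)x ⊕ λy` is `(1-2λ)x ⊕ 2λm` with `m` the midpoint of `x` and `y`, and (W1) together with
the uniform convexity bound at `m` gives `d((1-λ)x ⊕ λy, a) ≤ (1 - 2λη)r`. The case `λ ≥ 1/2`
follows by the symmetry (W3). -/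

namespace WHyp

variable {X : Type*} [MetricSpace X] (H : WHyp X)

theorem W_zero (x y : X) : H.W x y 0 = x := by
  have h := H.W1 x y x 0 ⟨le_rfl, zero_le_one⟩
  simp only [sub_zero, one_mul, dist_self, zero_mul, add_zero] at h
  exact (dist_le_zero.mp h).symm

theorem dist_W_left (x y : X) {l : ℝ} (hl : l ∈ Icc (0:ℝ) 1) :
    dist x (H.W x y l) = l * dist x y := by
  have h := H.W2 x y 0 ⟨le_rfl, zero_le_one⟩ l hl
  rw [H.W_zero, zero_sub, abs_neg, abs_of_nonneg hl.1] at h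
  exact h

theorem dist_W_right (x y : X) {l : ℝ} (hl : l ∈ Icc (0:ℝ) 1) :
    dist (H.W x y l) y = (1 - l) * dist x y := by
  have hl' : 1 - l ∈ Icc (0:ℝ) 1 := ⟨by linarith [hl.2], by linarith [hl.1]⟩
  rw [H.W3 x y l hl, dist_comm, H.dist_W_left y x hl', dist_comm]

namespace UnifConvex

variable {H} {η : ℝ → ℝ → ℝ}

theorem dist_midpoint_lt (hU : H.UnifConvex η) {r : ℝ} {a x y : X}
    (hxa : dist x a ≤ r) (hya : dist y a ≤ r) (hxy : x ≠ y) :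
    dist (H.W x y (1/2)) a < r := by
  have hD : 0 < dist x y := dist_pos.2 hxy
  have hD2 : dist x y ≤ 2 * r := by linarith [dist_triangle_right x y a]
  have hr : 0 < r := by linarith
  have hε : dist x y / r ∈ Ioc (0:ℝ) 2 := ⟨div_pos hD hr, (div_le_iff₀ hr).2 hD2⟩
  have hmid := hU.2 r _ a x y hr hε hxa hya (div_mul_cancel₀ _ hr.ne').le
  nlinarith [(hU.1 r _ hr hε).1]

theorem eq_of_dist_le (hU : H.UnifConvex η) {x y p q : X} {l : ℝ}
    (hpx : dist p x ≤ l * dist x y) (hpy : dist p y ≤ (1 - l) * dist x y)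
    (hqx : dist q x ≤ l * dist x y) (hqy : dist q y ≤ (1 - l) * dist x y) :
    p = q := by
  by_contra hpq
  have hmx := hU.dist_midpoint_lt hpx hqx hpq
  have hmy := hU.dist_midpoint_lt hpy hqy hpq
  linarith [dist_triangle_left x y (H.W p q (1/2))]

theorem W_W_eq_W_mul (hU : H.UnifConvex η) (x y : X) {l μ : ℝ}
    (hl : l ∈ Icc (0:ℝ) 1) (hμ : μ ∈ Icc (0:ℝ) 1) :
    H.W x (H.W x y μ) l = H.W x y (l * μ) := by
  have hlμ : l * μ ∈ Icc (0:ℝ) 1 :=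
    ⟨mul_nonneg hl.1 hμ.1, mul_le_one₀ hl.2 hμ.1 hμ.2⟩
  have hpx : dist (H.W x (H.W x y μ) l) x = l * μ * dist x y := by
    rw [dist_comm, H.dist_W_left _ _ hl, H.dist_W_left _ _ hμ, mul_assoc]
  have hpy : dist (H.W x (H.W x y μ) l) y ≤ (1 - l * μ) * dist x y := by
    have hpm := H.dist_W_right x (H.W x y μ) hl
    rw [H.dist_W_left _ _ hμ] at hpm
    have hmy := H.dist_W_right x y hμ
    nlinarith [dist_triangle (H.W x (H.W x y μ) l) (H.W x y μ) y]
  refine hU.eq_of_dist_le hpx.le hpy ?_ (H.dist_W_right x y hlμ).le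
  rw [dist_comm, H.dist_W_left _ _ hlμ]

theorem dist_W_le_of_le_half (hU : H.UnifConvex η) {r ε : ℝ} {a x y : X}
    (hr : 0 < r) (hε : ε ∈ Ioc (0:ℝ) 2)
    (hxa : dist x a ≤ r) (hya : dist y a ≤ r) (hxy : ε * r ≤ dist x y)
    {l : ℝ} (hl : l ∈ Icc (0:ℝ) (1/2)) :
    dist (H.W x y l) a ≤ (1 - 2 * l * η r ε) * r := by
  have h2l : 2 * l ∈ Icc (0:ℝ) 1 := ⟨by linarith [hl.1], by linarith [hl.2]⟩
  have hmid := hU.2 r ε a x y hr hε hxa hya hxy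
  have hconv := H.W1 x (H.W x y (1/2)) a (2 * l) h2l
  rw [hU.W_W_eq_W_mul x y h2l (by norm_num), show 2 * l * (1/2) = l by ring, dist_comm a x,
    dist_comm a (H.W x y (1/2)), dist_comm a] at hconv
  nlinarith [mul_le_mul_of_nonneg_left hxa (by linarith [hl.2] : (0:ℝ) ≤ 1 - 2 * l),
    mul_le_mul_of_nonneg_left hmid h2l.1]

end UnifConvex

end WHyp

theorem stmt0 {X : Type*} [MetricSpace X] (H : WHyp X) (η : ℝ → ℝ → ℝ)
    (hU : H.UnifConvex η) (r ε : ℝ) (a x y : X)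
    (hr : 0 < r) (hε : ε ∈ Set.Ioc (0:ℝ) 2)
    (hxa : dist x a ≤ r) (hya : dist y a ≤ r) (hxy : ε * r ≤ dist x y) :
    ∀ l ∈ Set.Icc (0:ℝ) 1,
      dist (H.W x y l) a ≤ (1 - 2 * l * (1 - l) * η r ε) * r := by
  intro l hl
  have hη := (hU.1 r ε hr hε).1
  rcases le_total l (1/2) with hhalf | hhalf
  · have h := hU.dist_W_le_of_le_half hr hε hxa hya hxy ⟨hl.1, hhalf⟩
    nlinarith [mul_nonneg (mul_nonneg hl.1 hl.1) hη.le]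
  · have h := hU.dist_W_le_of_le_half hr hε hya hxa (dist_comm x y ▸ hxy)
      (l := 1 - l) ⟨by linarith [hl.2], by linarith⟩
    rw [H.W3 x y l hl]
    nlinarith [mul_nonneg (mul_nonneg (sub_nonneg.2 hl.2) (sub_nonneg.2 hl.2)) hη.le]
end

section
/- Let (X,d,W) be a complete UCW-hyperbolic space. Then the intersection of any decreasing sequence (C_n)_{n∈ℕ} of nonempty bounded closed convex subsets of X (i.e., C_{n+1} ⊆ C_n for all n) is nonempty. -/
/-!
Fix any point `a`. The distances `infDist a (C n)` increase to some `r`. If `r = 0`, then `a`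
lies in every (closed) `C n`. Otherwise pick `x n ∈ C n` almost realising `infDist a (C n)`. Suppose
`x N` and `x n` (`n ≥ N`) stay `ε` apart. Their midpoint lies in the convex set `C N`, and
uniform convexity puts it closer to `a` than `infDist a (C N)` once `N` is large. So `(x n)` is
Cauchy. Its limit lies in every `C n`.
-/

open Set Filter Metric Bornology Function

/-- A modulus of uniform convexity is monotone if it decreases in `r` for fixed `ε`. -/
def MonotoneModulus (η : ℝ → ℝ → ℝ) : Prop :=
  ∀ r s ε : ℝ, 0 < r → r ≤ s → ε ∈ Set.Ioc (0:ℝ) 2 → η s ε ≤ η r ε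

/-- A subset `C` is convex in the `W`-hyperbolic space `H`. -/
def WHyp.ConvexSet {X : Type*} [MetricSpace X] (H : WHyp X) (C : Set X) : Prop :=
  ∀ x ∈ C, ∀ y ∈ C, ∀ l ∈ Set.Icc (0:ℝ) 1, H.W x y l ∈ C

open Topology

theorem Metric.exists_tendsto_infDist_of_antitone {X : Type*} [PseudoMetricSpace X]
    {C : ℕ → Set X} (hanti : Antitone C) (hne : ∀ n, (C n).Nonempty)
    (hbd : IsBounded (C 0)) (a : X) :
    ∃ r, (∀ n, infDist a (C n) ≤ r) ∧ Tendsto (fun n => infDist a (C n)) atTop (𝓝 r) := by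
  have hmono : Monotone fun n => infDist a (C n) :=
    fun m n hmn => infDist_le_infDist_of_subset (hanti hmn) (hne n)
  obtain ⟨M, hM⟩ := hbd.subset_closedBall a
  have hbdd : BddAbove (range fun n => infDist a (C n)) := by
    refine ⟨M, forall_mem_range.2 fun n => ?_⟩
    obtain ⟨y, hy⟩ := hne n
    calc infDist a (C n) ≤ dist a y := infDist_le_dist_of_mem hy
      _ = dist y a := dist_comm a y
      _ ≤ M := hM (hanti (Nat.zero_le n) hy)
  exact ⟨_, fun n => le_ciSup hbdd n, tendsto_atTop_ciSup hmono hbdd⟩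

namespace WHyp

variable {X : Type*} [MetricSpace X] {H : WHyp X} {η : ℝ → ℝ → ℝ}

theorem dist_midpoint_le_of_monotoneModulus (hU : H.UnifConvex η) (hmon : MonotoneModulus η)
    {R s δ : ℝ} {a x y : X} (hs : 0 < s) (hsR : s ≤ R) (hδ : δ ∈ Ioc (0 : ℝ) 2)
    (hx : dist x a ≤ s) (hy : dist y a ≤ s) (hxy : δ * R ≤ dist x y) :
    dist (H.W x y (1 / 2)) a ≤ (1 - η R δ) * s :=
  calc dist (H.W x y (1 / 2)) a
      ≤ (1 - η s δ) * s :=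
        hU.2 s δ a x y hs hδ hx hy ((mul_le_mul_of_nonneg_left hsR hδ.1.le).trans hxy)
    _ ≤ (1 - η R δ) * s := by
        gcongr
        exact hmon s R δ hs hsR hδ

theorem cauchySeq_of_tendsto_infDist (hU : H.UnifConvex η) (hmon : MonotoneModulus η)
    {C : ℕ → Set X} (hanti : Antitone C) (hconv : ∀ n, H.ConvexSet (C n))
    {a : X} {r : ℝ} (hr : 0 < r) (hlim : Tendsto (fun n => infDist a (C n)) atTop (𝓝 r))
    {s : ℕ → ℝ} (hs_anti : Antitone s) (hs_lim : Tendsto s atTop (𝓝 r))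
    {x : ℕ → X} (hxC : ∀ n, x n ∈ C n) (hxa : ∀ n, dist (x n) a ≤ s n) :
    CauchySeq x := by
  have hs_ge : ∀ n, r ≤ s n := fun n => hs_anti.le_of_tendsto hs_lim n
  refine Metric.cauchySeq_iff'.2 fun ε hε => ?_
  set R := s 0
  have hR : 0 < R := hr.trans_le (hs_ge 0)
  set δ := min (ε / R) 2
  have hδ : δ ∈ Ioc (0 : ℝ) 2 := ⟨lt_min (div_pos hε hR) two_pos, min_le_right _ _⟩
  have hδR : δ * R ≤ ε := (le_div_iff₀ hR).1 (min_le_left _ _)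
  have hη : 0 < η R δ := (hU.1 R δ hR hδ).1
  obtain ⟨N, hN⟩ : ∃ N, (1 - η R δ) * s N < infDist a (C N) :=
    ((hs_lim.const_mul _).eventually_lt hlim (by nlinarith)).exists
  refine ⟨N, fun n hn => ?_⟩
  by_contra! hfar
  have hmid_mem : H.W (x n) (x N) (1 / 2) ∈ C N :=
    hconv N _ (hanti hn (hxC n)) _ (hxC N) _ ⟨by norm_num, by norm_num⟩
  have hmid := dist_midpoint_le_of_monotoneModulus hU hmon (hr.trans_le (hs_ge N))
    (hs_anti (Nat.zero_le N)) hδ ((hxa n).trans (hs_anti hn)) (hxa N) (hδR.trans hfar)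
  have hinf := infDist_le_dist_of_mem (x := a) hmid_mem
  rw [dist_comm] at hinf
  linarith

end WHyp

theorem stmt3 {X : Type*} [MetricSpace X] [CompleteSpace X] (H : WHyp X)
    (η : ℝ → ℝ → ℝ) (hU : H.UnifConvex η) (hmon : MonotoneModulus η)
    (C : ℕ → Set X)
    (hne : ∀ n, (C n).Nonempty) (hbd : ∀ n, Bornology.IsBounded (C n))
    (hcl : ∀ n, IsClosed (C n)) (hconv : ∀ n, H.ConvexSet (C n))
    (hdec : ∀ n, C (n + 1) ⊆ C n) :
    (⋂ n, C n).Nonempty := by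
  have hanti : Antitone C := antitone_nat_of_succ_le hdec
  obtain ⟨a, -⟩ := hne 0
  obtain ⟨r, hle, hlim⟩ := exists_tendsto_infDist_of_antitone hanti hne (hbd 0) a
  rcases (infDist_nonneg.trans (hle 0)).eq_or_lt with hr | hr
  · refine ⟨a, mem_iInter.2 fun n => ((hcl n).mem_iff_infDist_zero (hne n)).2 ?_⟩
    exact le_antisymm (hr ▸ hle n) infDist_nonneg
  have hx : ∀ n : ℕ, ∃ x ∈ C n, dist a x < r + 1 / (n + 1) := fun n =>
    (infDist_lt_iff (hne n)).1 (by linarith [hle n, Nat.one_div_pos_of_nat (α := ℝ) (n := n)])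
  choose x hxC hxa using hx
  have hs_anti : Antitone fun n : ℕ => r + 1 / ((n : ℝ) + 1) :=
    fun m n hmn => by dsimp only; gcongr
  have hs_lim : Tendsto (fun n : ℕ => r + 1 / ((n : ℝ) + 1)) atTop (𝓝 r) := by
    simpa using tendsto_one_div_add_atTop_nhds_zero_nat.const_add r
  obtain ⟨p, hp⟩ := cauchySeq_tendsto_of_complete <|
    WHyp.cauchySeq_of_tendsto_infDist hU hmon hanti hconv hr hlim hs_anti hs_lim hxC
      fun n => (dist_comm _ _).trans_le (hxa n).le
  exact ⟨p, mem_iInter.2 fun n =>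
    (hcl n).mem_of_tendsto hp (eventually_atTop.2 ⟨n, fun k hk => hanti hk (hxC k)⟩)⟩
end

section
/- Let (X,d,W) be a complete UCW-hyperbolic space, C a nonempty closed convex subset of X, and f : C → [0,∞) convex and lower semicontinuous. Assume moreover that for every sequence (x_n) in C, if lim_{n→∞} d(x_n,a) = ∞ for some a ∈ X then lim_{n→∞} f(x_n) = ∞. Then f attains its minimum on C. If in addition f((1/2)x ⊕ (1/2)y) < max{f(x), f(y)} for all x,y ∈ C with x ≠ y, then f attains its minimum at exactly one point of C. -/
open Set Filter Metric Bornology Function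

/-!
The sublevel sets `C ∩ {f ≤ c}` are closed, convex and (by coercivity) bounded, so the heart
of the matter is that in a complete UCW-hyperbolic space a decreasing sequence of nonempty
bounded closed convex sets `S k` has a common point. Fix `a` and let `r k = dist(a, S k)`,
which increases to some `ρ`. Pick `y k ∈ S k` nearly realising `r k`. Midpoints of `y k` and
`y l` lie in `S (min k l)`, hence at distance at least about `ρ` from `a`, while `y k` and
`y l` themselves lie in balls around `a` of radius about `ρ`; uniform convexity (with a modulus
uniform over radii `≤ 2ρ`, by monotonicity) then forces `dist (y k) (y l) → 0`. The limit lies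
in every `S k`.
Applied to the levels `-k` this shows that `f` is bounded below on `C`, and applied to the
levels `inf f + 1/(k+1)` it yields a minimiser.
-/

open scoped Topology

def WHyp.ConvexOn {X : Type*} [MetricSpace X] (H : WHyp X) (C : Set X) (f : X → ℝ) : Prop :=
  ∀ x ∈ C, ∀ y ∈ C, ∀ l ∈ Set.Icc (0:ℝ) 1, f (H.W x y l) ≤ (1 - l) * f x + l * f y

section Sublevel

variable {X : Type*} [MetricSpace X] {C : Set X} {f : X → ℝ}

theorem LowerSemicontinuousOn.isClosed_inter_preimage_Iic (hf : LowerSemicontinuousOn f C)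
    (hC : IsClosed C) (c : ℝ) : IsClosed (C ∩ f ⁻¹' Iic c) := by
  obtain ⟨v, hv, hCv⟩ := lowerSemicontinuousOn_iff_preimage_Iic.mp hf c
  exact hCv ▸ hC.inter hv

theorem WHyp.ConvexSet.inter_preimage_Iic {H : WHyp X} (hC : H.ConvexSet C) (hf : H.ConvexOn C f)
    (c : ℝ) : H.ConvexSet (C ∩ f ⁻¹' Iic c) := by
  rintro x ⟨hxC, hx⟩ y ⟨hyC, hy⟩ l hl
  refine ⟨hC x hxC y hyC l hl, (hf x hxC y hyC l hl).trans ?_⟩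
  rw [mem_preimage, mem_Iic] at hx hy
  nlinarith [hl.1, hl.2]

theorem isBounded_inter_preimage_Iic_of_coercive
    (hcoercive : ∀ u : ℕ → X, (∀ n, u n ∈ C) →
      (∃ a : X, Tendsto (fun n => dist (u n) a) atTop atTop) →
      Tendsto (fun n => f (u n)) atTop atTop) (c : ℝ) :
    IsBounded (C ∩ f ⁻¹' Iic c) := by
  rcases (C ∩ f ⁻¹' Iic c).eq_empty_or_nonempty with hempty | ⟨a, -⟩
  · exact hempty ▸ isBounded_empty
  rw [isBounded_iff_subset_closedBall a]
  by_contra! hfar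
  choose u hu hua using fun n : ℕ => not_subset.mp (hfar n)
  have hdist : Tendsto (fun n => dist (u n) a) atTop atTop :=
    tendsto_atTop_mono (fun n => (not_le.mp (hua n)).le) tendsto_natCast_atTop_atTop
  obtain ⟨n, hn⟩ :=
    ((hcoercive u (fun n => (hu n).1) ⟨a, hdist⟩).eventually_gt_atTop c).exists
  exact (not_lt.mpr (hu n).2) hn

end Sublevel

theorem tendsto_const_add_one_div_add_atTop (c : ℝ) :
    Tendsto (fun n : ℕ => c + 1 / ((n:ℝ) + 1)) atTop (𝓝 c) := by
  simpa using tendsto_one_div_add_atTop_nhds_zero_nat.const_add c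

namespace WHyp.UnifConvex

variable {X : Type*} [MetricSpace X] {H : WHyp X} {η : ℝ → ℝ → ℝ}

theorem dist_midpoint_le (hU : H.UnifConvex η) (hmon : MonotoneModulus η) {R s ε : ℝ}
    {a x y : X} (hs : 0 < s) (hsR : s ≤ R) (hε : ε ∈ Ioc (0:ℝ) 2) (hx : dist x a ≤ s)
    (hy : dist y a ≤ s) (hxy : ε * R ≤ dist x y) :
    dist (H.W x y (1/2)) a ≤ (1 - η R ε) * s := by
  have hεs : ε * s ≤ dist x y := le_trans (by gcongr; exact hε.1.le) hxy
  refine (hU.2 s ε a x y hs hε hx hy hεs).trans ?_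
  gcongr
  exact hmon s R ε hs hsR hε

theorem cauchySeq_of_dist_midpoint (hU : H.UnifConvex η) (hmon : MonotoneModulus η)
    {y : ℕ → X} {a : X} {ρ : ℝ} {lo up : ℕ → ℝ}
    (hlo : Tendsto lo atTop (𝓝 ρ)) (hup : Tendsto up atTop (𝓝 ρ))
    (hy : ∀ N k, N ≤ k → dist (y k) a ≤ up N)
    (hmid : ∀ N k l, N ≤ k → N ≤ l → lo N ≤ dist (H.W (y k) (y l) (1/2)) a) :
    CauchySeq y := by
  have hρ : 0 ≤ ρ :=
    ge_of_tendsto' hup fun N => dist_nonneg.trans (hy N N le_rfl)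
  rw [Metric.cauchySeq_iff]
  intro ε hε
  rcases hρ.eq_or_lt with rfl | hρ
  · obtain ⟨N, hN⟩ := (hup.eventually (gt_mem_nhds (half_pos hε))).exists
    refine ⟨N, fun k hk l hl => ?_⟩
    linarith [dist_triangle_right (y k) (y l) a, hy N k hk, hy N l hl]
  -- Balls of radius at most `2ρ` are uniformly convex with the single modulus `δ`.
  set ε₀ := min (ε / (2 * ρ)) 2
  have hε₀ : ε₀ ∈ Ioc (0:ℝ) 2 := ⟨lt_min (by positivity) two_pos, min_le_right _ _⟩
  set δ := η (2 * ρ) ε₀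
  have hδ : δ ∈ Ioc (0:ℝ) 1 := hU.1 _ _ (by positivity) hε₀
  have hδρ : 0 < δ * ρ / 4 := by have := hδ.1; positivity
  have hupN := hup.eventually (Ioo_mem_nhds hρ (by linarith : ρ < ρ + δ * ρ / 4))
  have hloN := hlo.eventually (lt_mem_nhds (by linarith : ρ - δ * ρ / 4 < ρ))
  obtain ⟨N, hupN, hloN⟩ := (hupN.and hloN).exists
  refine ⟨N, fun k hk l hl => ?_⟩
  by_contra! hfar
  have hε₀R : ε₀ * (2 * ρ) ≤ dist (y k) (y l) := by
    calc ε₀ * (2 * ρ) ≤ ε / (2 * ρ) * (2 * ρ) := by gcongr; exact min_le_left _ _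
      _ = ε := div_mul_cancel₀ ε (by positivity)
      _ ≤ _ := hfar
  have hupR : up N ≤ 2 * ρ := by nlinarith [hupN.2, hδ.2]
  have hclose := hU.dist_midpoint_le hmon hupN.1 hupR hε₀ (hy N k hk) (hy N l hl) hε₀R
  have hlo_le : lo N ≤ (1 - δ) * (ρ + δ * ρ / 4) :=
    (hmid N k l hk hl).trans <|
      hclose.trans (mul_le_mul_of_nonneg_left hupN.2.le (by linarith [hδ.2]))
  nlinarith [hδ.1]

theorem nonempty_iInter [CompleteSpace X] (hU : H.UnifConvex η) (hmon : MonotoneModulus η)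
    {S : ℕ → Set X} (hS : Antitone S) (hne : ∀ k, (S k).Nonempty)
    (hcl : ∀ k, IsClosed (S k)) (hconv : ∀ k, H.ConvexSet (S k)) (hbdd : IsBounded (S 0)) :
    (⋂ k, S k).Nonempty := by
  obtain ⟨a, -⟩ := hne 0
  obtain ⟨R, hR⟩ := (isBounded_iff_subset_closedBall a).mp hbdd
  set r : ℕ → ℝ := fun k => infDist a (S k)
  have hr_mono : Monotone r := fun k l hkl => infDist_le_infDist_of_subset (hS hkl) (hne l)
  have hr_bdd : BddAbove (range r) := by
    refine ⟨R, forall_mem_range.mpr fun k => ?_⟩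
    obtain ⟨x, hx⟩ := hne k
    calc r k ≤ dist a x := infDist_le_dist_of_mem hx
      _ ≤ R := by rw [dist_comm]; exact hR (hS (Nat.zero_le k) hx)
  set ρ := ⨆ k, r k
  have hy : ∀ k : ℕ, ∃ x ∈ S k, dist a x < r k + 1 / ((k:ℝ) + 1) := fun k =>
    (infDist_lt_iff (hne k)).mp (lt_add_of_pos_right _ Nat.one_div_pos_of_nat)
  choose y hyS hya using hy
  have hy_cauchy : CauchySeq y := by
    refine hU.cauchySeq_of_dist_midpoint hmon (a := a) (tendsto_atTop_ciSup hr_mono hr_bdd)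
      (tendsto_const_add_one_div_add_atTop ρ)
      (fun N k hk => ?_) (fun N k l hk hl => ?_)
    · rw [dist_comm]
      linarith [hya k, le_ciSup hr_bdd k, Nat.one_div_le_one_div (α := ℝ) hk]
    · rw [dist_comm]
      exact infDist_le_dist_of_mem
        (hconv N _ (hS hk (hyS k)) _ (hS hl (hyS l)) _ ⟨by norm_num, by norm_num⟩)
  obtain ⟨z, hz⟩ := cauchySeq_tendsto_of_complete hy_cauchy
  exact ⟨z, mem_iInter.mpr fun k =>
    (hcl k).mem_of_tendsto hz (eventually_atTop.mpr ⟨k, fun n hn => hS hn (hyS n)⟩)⟩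

variable [CompleteSpace X] {C : Set X} {f : X → ℝ}

theorem exists_forall_le_of_antitone (hU : H.UnifConvex η) (hmon : MonotoneModulus η)
    (hCcl : IsClosed C) (hCconv : H.ConvexSet C) (hf : H.ConvexOn C f)
    (hlsc : LowerSemicontinuousOn f C) (hbdd : ∀ c, IsBounded (C ∩ f ⁻¹' Iic c))
    {t : ℕ → ℝ} (ht : Antitone t) (hne : ∀ k, ∃ x ∈ C, f x ≤ t k) :
    ∃ z ∈ C, ∀ k, f z ≤ t k := by
  obtain ⟨z, hz⟩ := hU.nonempty_iInter hmon (S := fun k => C ∩ f ⁻¹' Iic (t k))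
    (fun k l hkl => inter_subset_inter_right _ (preimage_mono (Iic_subset_Iic.mpr (ht hkl))))
    hne (fun k => hlsc.isClosed_inter_preimage_Iic hCcl _)
    (fun k => hCconv.inter_preimage_Iic hf _) (hbdd _)
  rw [mem_iInter] at hz
  exact ⟨z, (hz 0).1, fun k => (hz k).2⟩

theorem bddBelow_image (hU : H.UnifConvex η) (hmon : MonotoneModulus η)
    (hCcl : IsClosed C) (hCconv : H.ConvexSet C) (hf : H.ConvexOn C f)
    (hlsc : LowerSemicontinuousOn f C) (hbdd : ∀ c, IsBounded (C ∩ f ⁻¹' Iic c)) :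
    BddBelow (f '' C) := by
  by_contra hunbdd
  have hne : ∀ k : ℕ, ∃ x ∈ C, f x ≤ -k := fun k => by
    obtain ⟨_, ⟨x, hx, rfl⟩, hlt⟩ := not_bddBelow_iff.mp hunbdd (-k)
    exact ⟨x, hx, hlt.le⟩
  obtain ⟨z, -, hz⟩ := hU.exists_forall_le_of_antitone hmon hCcl hCconv hf hlsc hbdd
    (fun k l hkl => neg_le_neg (Nat.cast_le.mpr hkl)) hne
  obtain ⟨k, hk⟩ := exists_nat_gt (-f z)
  linarith [hz k]

theorem exists_isMinOn (hU : H.UnifConvex η) (hmon : MonotoneModulus η) (hCne : C.Nonempty)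
    (hCcl : IsClosed C) (hCconv : H.ConvexSet C) (hf : H.ConvexOn C f)
    (hlsc : LowerSemicontinuousOn f C) (hbdd : ∀ c, IsBounded (C ∩ f ⁻¹' Iic c)) :
    ∃ z ∈ C, IsMinOn f C z := by
  have hbelow := hU.bddBelow_image hmon hCcl hCconv hf hlsc hbdd
  set m := sInf (f '' C)
  have hne : ∀ k : ℕ, ∃ x ∈ C, f x ≤ m + 1 / ((k:ℝ) + 1) := fun k => by
    obtain ⟨_, ⟨x, hx, rfl⟩, hlt⟩ :=
      exists_lt_of_csInf_lt (hCne.image f) (lt_add_of_pos_right m Nat.one_div_pos_of_nat)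
    exact ⟨x, hx, hlt.le⟩
  obtain ⟨z, hzC, hz⟩ := hU.exists_forall_le_of_antitone hmon hCcl hCconv hf hlsc hbdd
    (fun k l hkl => add_le_add_right (Nat.one_div_le_one_div hkl) m) hne
  have hzm : f z ≤ m := ge_of_tendsto' (tendsto_const_add_one_div_add_atTop m) hz
  exact ⟨z, hzC, fun y hy => hzm.trans (csInf_le hbelow (mem_image_of_mem f hy))⟩

end WHyp.UnifConvex

theorem WHyp.ConvexSet.eq_of_isMinOn {X : Type*} [MetricSpace X] {H : WHyp X} {C : Set X}
    {f : X → ℝ} (hC : H.ConvexSet C)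
    (hstrict : ∀ x ∈ C, ∀ y ∈ C, x ≠ y → f (H.W x y (1/2)) < max (f x) (f y))
    {x y : X} (hx : x ∈ C) (hy : y ∈ C) (hxmin : IsMinOn f C x) (hymin : IsMinOn f C y) :
    x = y := by
  by_contra hxy
  have hfxy : f x = f y := le_antisymm (hxmin hy) (hymin hx)
  have hlt := hstrict x hx y hy hxy
  rw [hfxy, max_self] at hlt
  exact (not_lt.mpr (hymin (hC x hx y hy _ ⟨by norm_num, by norm_num⟩))) hlt

theorem stmt4_general {X : Type*} [MetricSpace X] [CompleteSpace X] (H : WHyp X)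
    (η : ℝ → ℝ → ℝ) (hU : H.UnifConvex η) (hmon : MonotoneModulus η)
    (C : Set X) (hCne : C.Nonempty) (hCcl : IsClosed C) (hCconv : H.ConvexSet C)
    (f : X → ℝ)
    (hfconv : ∀ x ∈ C, ∀ y ∈ C, ∀ l ∈ Set.Icc (0:ℝ) 1,
      f (H.W x y l) ≤ (1 - l) * f x + l * f y)
    (hlsc : LowerSemicontinuousOn f C)
    (hcoercive : ∀ u : ℕ → X, (∀ n, u n ∈ C) →
      (∃ a : X, Filter.Tendsto (fun n => dist (u n) a) Filter.atTop Filter.atTop) →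
      Filter.Tendsto (fun n => f (u n)) Filter.atTop Filter.atTop) :
    (∃ z ∈ C, ∀ y ∈ C, f z ≤ f y) ∧
      ((∀ x ∈ C, ∀ y ∈ C, x ≠ y → f (H.W x y (1/2)) < max (f x) (f y)) →
        ∃! z, z ∈ C ∧ ∀ y ∈ C, f z ≤ f y) := by
  obtain ⟨z, hzC, hzmin⟩ := hU.exists_isMinOn hmon hCne hCcl hCconv hfconv hlsc
    (isBounded_inter_preimage_Iic_of_coercive hcoercive)
  have hz : z ∈ C ∧ ∀ y ∈ C, f z ≤ f y := ⟨hzC, isMinOn_iff.mp hzmin⟩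
  refine ⟨⟨z, hz⟩, fun hstrict => ⟨z, hz, ?_⟩⟩
  rintro w ⟨hwC, hwmin⟩
  exact hCconv.eq_of_isMinOn hstrict hwC hzC (isMinOn_iff.mpr hwmin) hzmin

theorem stmt4 {X : Type*} [MetricSpace X] [CompleteSpace X] (H : WHyp X)
    (η : ℝ → ℝ → ℝ) (hU : H.UnifConvex η) (hmon : MonotoneModulus η)
    (C : Set X) (hCne : C.Nonempty) (hCcl : IsClosed C) (hCconv : H.ConvexSet C)
    (f : X → ℝ) (hf0 : ∀ x ∈ C, 0 ≤ f x)
    (hfconv : ∀ x ∈ C, ∀ y ∈ C, ∀ l ∈ Set.Icc (0:ℝ) 1,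
      f (H.W x y l) ≤ (1 - l) * f x + l * f y)
    (hlsc : LowerSemicontinuousOn f C)
    (hcoercive : ∀ u : ℕ → X, (∀ n, u n ∈ C) →
      (∃ a : X, Filter.Tendsto (fun n => dist (u n) a) Filter.atTop Filter.atTop) →
      Filter.Tendsto (fun n => f (u n)) Filter.atTop Filter.atTop) :
    (∃ z ∈ C, ∀ y ∈ C, f z ≤ f y) ∧
      ((∀ x ∈ C, ∀ y ∈ C, x ≠ y → f (H.W x y (1/2)) < max (f x) (f y)) →
        ∃! z, z ∈ C ∧ ∀ y ∈ C, f z ≤ f y) :=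
  stmt4_general H η hU hmon C hCne hCcl hCconv f hfconv hlsc hcoercive
end

section
/- Let (X,d,W) be a complete UCW-hyperbolic space. Then every nonempty closed convex subset C of X is a Chebyshev set: for each x ∈ X there exists a unique z ∈ C such that d(x,z) = inf{d(x,y) : y ∈ C}. -/
open Set Filter Metric Bornology Function

/-!
Uniform convexity forces approximate nearest points to be close to each other: if `u, v ∈ C`
lie within `d + t` of `x`, where `d = dist(x, C) > 0`, then their midpoint lies in `C`, hence at
distance at least `d` from `x`, and this forces `dist u v ≤ ε` as soon as `t` is small compared
with `η(2d, ε / 2d) * d`; monotonicity of `η` is what lets the single radius `2d` serve for all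
`d + t ≤ 2d`. So minimizing sequences are Cauchy, which gives a nearest point by completeness
and closedness, and two nearest points are at distance `≤ ε` for every `ε > 0`.
-/

open Topology

lemma Metric.exists_seq_mem_tendsto_infDist {X : Type*} [PseudoMetricSpace X] {C : Set X}
    (hC : C.Nonempty) (x : X) :
    ∃ z : ℕ → X, (∀ n, z n ∈ C) ∧
      Tendsto (fun n => dist x (z n)) atTop (𝓝 (infDist x C)) := by
  have hclose : ∀ n : ℕ, ∃ z ∈ C, dist x z < infDist x C + 1 / (n + 1) := fun n =>
    (infDist_lt_iff hC).mp (lt_add_of_pos_right _ Nat.one_div_pos_of_nat)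
  choose z hzC hzx using hclose
  refine ⟨z, hzC, tendsto_of_tendsto_of_tendsto_of_le_of_le tendsto_const_nhds ?_
    (fun n => infDist_le_dist_of_mem (hzC n)) (fun n => (hzx n).le)⟩
  simpa using tendsto_const_nhds.add (tendsto_one_div_add_atTop_nhds_zero_nat (𝕜 := ℝ))

namespace WHyp.UnifConvex

variable {X : Type*} [MetricSpace X] {H : WHyp X} {η : ℝ → ℝ → ℝ}

lemma dist_W_half_le (hU : H.UnifConvex η) (hmon : MonotoneModulus η) {r s ε : ℝ}
    {a u v : X} (hr : 0 < r) (hrs : r ≤ s) (hε : ε ∈ Ioc (0 : ℝ) 2) (hu : dist u a ≤ r)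
    (hv : dist v a ≤ r) (huv : ε * r ≤ dist u v) :
    dist (H.W u v (1 / 2)) a ≤ (1 - η s ε) * r :=
  (hU.2 r ε a u v hr hε hu hv huv).trans
    (mul_le_mul_of_nonneg_right (by linarith [hmon r s ε hr hrs hε]) hr.le)

lemma exists_pos_forall_dist_le_of_dist_le_infDist_add (hU : H.UnifConvex η)
    (hmon : MonotoneModulus η) {C : Set X} (hC : H.ConvexSet C) (x : X) {ε : ℝ} (hε : 0 < ε) :
    ∃ t > 0, ∀ u ∈ C, ∀ v ∈ C,
      dist x u ≤ infDist x C + t → dist x v ≤ infDist x C + t → dist u v ≤ ε := by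
  set d := infDist x C
  rcases (infDist_nonneg : 0 ≤ d).eq_or_lt with hd | hd
  · refine ⟨ε / 2, half_pos hε, fun u _ v _ hu hv => ?_⟩
    linarith [dist_triangle_left u v x]
  set ε' := min (ε / (2 * d)) 2
  have hε' : ε' ∈ Ioc (0 : ℝ) 2 := ⟨lt_min (by positivity) two_pos, min_le_right _ _⟩
  have hε'd : ε' * (2 * d) ≤ ε := (le_div_iff₀ (by positivity)).mp (min_le_left _ _)
  set κ := η (2 * d) ε'
  have hκ : 0 < κ := (hU.1 _ _ (by positivity) hε').1
  refine ⟨min d (κ * d / 2), by positivity, fun u hu v hv hux hvx => ?_⟩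
  by_contra! hfar
  set r := d + min d (κ * d / 2)
  have hdr : d ≤ r := le_add_of_nonneg_right (by positivity)
  have hr2d : r ≤ 2 * d := by linarith [min_le_left d (κ * d / 2)]
  have hmid : dist (H.W u v (1 / 2)) x ≤ (1 - κ) * r :=
    hU.dist_W_half_le hmon (by positivity) hr2d hε' (dist_comm u x ▸ hux)
      (dist_comm v x ▸ hvx) (by nlinarith [hε'.1])
  have hd_le : d ≤ dist (H.W u v (1 / 2)) x :=
    dist_comm x _ ▸ infDist_le_dist_of_mem (hC u hu v hv _ ⟨by norm_num, by norm_num⟩)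
  linarith [min_le_right d (κ * d / 2), mul_le_mul_of_nonneg_left hdr hκ.le, mul_pos hκ hd]

lemma eq_of_dist_eq_infDist (hU : H.UnifConvex η) (hmon : MonotoneModulus η) {C : Set X}
    (hC : H.ConvexSet C) {x u v : X} (hu : u ∈ C) (hv : v ∈ C) (hux : dist x u = infDist x C)
    (hvx : dist x v = infDist x C) : u = v := by
  refine eq_of_forall_dist_le fun ε hε => ?_
  obtain ⟨t, ht, hclose⟩ := hU.exists_pos_forall_dist_le_of_dist_le_infDist_add hmon hC x hε
  exact hclose u hu v hv (by linarith) (by linarith)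

lemma cauchySeq_of_tendsto_infDist (hU : H.UnifConvex η) (hmon : MonotoneModulus η)
    {C : Set X} (hC : H.ConvexSet C) {x : X} {z : ℕ → X} (hzC : ∀ n, z n ∈ C)
    (hz : Tendsto (fun n => dist x (z n)) atTop (𝓝 (infDist x C))) : CauchySeq z := by
  refine Metric.cauchySeq_iff.mpr fun ε hε => ?_
  obtain ⟨t, ht, hclose⟩ :=
    hU.exists_pos_forall_dist_le_of_dist_le_infDist_add hmon hC x (half_pos hε)
  obtain ⟨N, hN⟩ := eventually_atTop.mp (hz.eventually (ge_mem_nhds (lt_add_of_pos_right _ ht)))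
  exact ⟨N, fun m hm n hn =>
    (hclose _ (hzC m) _ (hzC n) (hN m hm) (hN n hn)).trans_lt (half_lt_self hε)⟩

end WHyp.UnifConvex

theorem stmt5 {X : Type*} [MetricSpace X] [CompleteSpace X] (H : WHyp X)
    (η : ℝ → ℝ → ℝ) (hU : H.UnifConvex η) (hmon : MonotoneModulus η)
    (C : Set X) (hCne : C.Nonempty) (hCcl : IsClosed C) (hCconv : H.ConvexSet C) :
    ∀ x : X, ∃! z, z ∈ C ∧ dist x z = Metric.infDist x C := by
  intro x
  obtain ⟨z, hzC, hz⟩ := exists_seq_mem_tendsto_infDist hCne x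
  obtain ⟨p, hp⟩ :=
    cauchySeq_tendsto_of_complete (hU.cauchySeq_of_tendsto_infDist hmon hCconv hzC hz)
  have hpC : p ∈ C := hCcl.mem_of_tendsto hp (.of_forall hzC)
  have hpx : dist x p = infDist x C := tendsto_nhds_unique (tendsto_const_nhds.dist hp) hz
  exact ⟨p, ⟨hpC, hpx⟩,
    fun q ⟨hqC, hqx⟩ => hU.eq_of_dist_eq_infDist hmon hCconv hqC hpC hqx hpx⟩
end

section
/- Let (X,d,W) be a complete UCW-hyperbolic space. Then every bounded sequence (x_n) in X has a unique asymptotic center with respect to any nonempty closed convex subset C of X. -/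
open Set Filter Metric Bornology Function

/-!
The asymptotic radius `r y = limsup d(y, xₙ)` is `1`-Lipschitz, and uniform convexity makes it
uniformly convex on `C`: if `a, b ∈ C` are far apart and both have radius below `R`, then the
midpoint has radius at most `(1 - η(R, ε)) R`. Hence near-minimisers of `r` on `C` are uniformly
close to each other (monotonicity of `η` makes the closeness uniform as `R` decreases to the
infimum). A minimising sequence is therefore Cauchy, its limit lies in `C` and minimises `r`, and
two minimisers must coincide.
-/

open Topology

section AsymptoticRadius

variable {X : Type*} [MetricSpace X] {x : ℕ → X}

noncomputable def asymptoticRadius (x : ℕ → X) (y : X) : ℝ :=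
  limsup (fun n => dist y (x n)) atTop

lemma isBoundedUnder_dist (hx : IsBounded (range x)) (y : X) :
    IsBoundedUnder (· ≤ ·) atTop (fun n => dist y (x n)) := by
  obtain ⟨R, hR⟩ := (isBounded_iff_subset_closedBall y).1 hx
  exact isBoundedUnder_of ⟨R, fun n => by
    simpa [dist_comm] using hR (mem_range_self n)⟩

lemma isCoboundedUnder_dist (y : X) :
    IsCoboundedUnder (· ≤ ·) atTop (fun n => dist y (x n)) :=
  isCoboundedUnder_le_of_le atTop fun _ => dist_nonneg

lemma asymptoticRadius_nonneg (hx : IsBounded (range x)) (y : X) : 0 ≤ asymptoticRadius x y :=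
  le_limsup_of_frequently_le (Frequently.of_forall fun _ => dist_nonneg) (isBoundedUnder_dist hx y)

lemma asymptoticRadius_le_dist_add (hx : IsBounded (range x)) (a b : X) :
    asymptoticRadius x a ≤ asymptoticRadius x b + dist a b := by
  have h := limsup_le_limsup (Eventually.of_forall fun n => dist_triangle a b (x n))
    (isCoboundedUnder_dist a) (isBoundedUnder_le_add isBoundedUnder_const (isBoundedUnder_dist hx b))
  rw [limsup_const_add atTop _ _ (isBoundedUnder_dist hx b) (isCoboundedUnder_dist b)] at h
  unfold asymptoticRadius
  linarith

lemma lipschitzWith_asymptoticRadius (hx : IsBounded (range x)) :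
    LipschitzWith 1 (asymptoticRadius x) :=
  LipschitzWith.of_le_add (asymptoticRadius_le_dist_add hx)

lemma dist_le_asymptoticRadius_add (hx : IsBounded (range x)) (a b : X) :
    dist a b ≤ asymptoticRadius x a + asymptoticRadius x b := by
  have h : dist a b ≤ limsup (fun n => dist a (x n) + dist b (x n)) atTop :=
    le_limsup_of_frequently_le (Frequently.of_forall fun n => dist_triangle_right a b (x n))
      (isBoundedUnder_le_add (isBoundedUnder_dist hx a) (isBoundedUnder_dist hx b))
  exact h.trans (limsup_add_le (isBoundedUnder_of ⟨0, fun _ => dist_nonneg⟩)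
    (isBoundedUnder_dist hx a) (isCoboundedUnder_dist b) (isBoundedUnder_dist hx b))

variable {H : WHyp X} {η : ℝ → ℝ → ℝ} {C : Set X}

lemma asymptoticRadius_midpoint_le (hx : IsBounded (range x)) (hU : H.UnifConvex η) {a b : X}
    {R ε : ℝ} (hR : 0 < R) (hε : ε ∈ Ioc 0 2) (ha : asymptoticRadius x a < R)
    (hb : asymptoticRadius x b < R) (hab : ε * R ≤ dist a b) :
    asymptoticRadius x (H.W a b (1 / 2)) ≤ (1 - η R ε) * R := by
  refine limsup_le_of_le (isCoboundedUnder_dist _) ?_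
  filter_upwards [eventually_lt_of_limsup_lt ha (isBoundedUnder_dist hx a),
    eventually_lt_of_limsup_lt hb (isBoundedUnder_dist hx b)] with n han hbn
  exact hU.2 R ε (x n) a b hR hε han.le hbn.le hab

lemma exists_forall_dist_le_of_asymptoticRadius_lt (hx : IsBounded (range x))
    (hU : H.UnifConvex η) (hmon : MonotoneModulus η) (hC : H.ConvexSet C) {m : ℝ}
    (hm : ∀ y ∈ C, m ≤ asymptoticRadius x y) {ε : ℝ} (hε : 0 < ε) :
    ∃ δ > 0, ∀ a ∈ C, ∀ b ∈ C, asymptoticRadius x a < m + δ → asymptoticRadius x b < m + δ →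
      dist a b ≤ ε := by
  rcases le_or_gt m 0 with hm0 | hm0
  · refine ⟨ε / 2, half_pos hε, fun a _ b _ ha hb => ?_⟩
    linarith [dist_le_asymptoticRadius_add hx a b]
  set ε₀ := min (ε / (m + 1)) 2
  have hε₀ : ε₀ ∈ Ioc 0 2 := ⟨lt_min (by positivity) two_pos, min_le_right _ _⟩
  set η₀ := η (m + 1) ε₀
  have hη₀ : 0 < η₀ := (hU.1 _ _ (by linarith) hε₀).1
  set δ := min 1 (η₀ * m)
  have hδ : 0 < δ := by positivity
  refine ⟨δ, hδ, fun a ha b hb har hbr => ?_⟩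
  by_contra! hab
  have hδ1 : δ ≤ 1 := min_le_left _ _
  have hδm : δ ≤ η₀ * m := min_le_right _ _
  have hR : 0 < m + δ := by positivity
  have hεR : ε₀ * (m + δ) ≤ dist a b :=
    calc ε₀ * (m + δ) ≤ ε / (m + 1) * (m + 1) :=
          mul_le_mul (min_le_left _ _) (by linarith) hR.le (by positivity)
      _ = ε := div_mul_cancel₀ _ (by positivity)
      _ ≤ dist a b := hab.le
  have hηR : η₀ ≤ η (m + δ) ε₀ := hmon _ _ _ hR (by linarith) hε₀
  have : m < m :=
    calc m ≤ asymptoticRadius x (H.W a b (1 / 2)) :=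
          hm _ (hC a ha b hb _ ⟨by norm_num, by norm_num⟩)
      _ ≤ (1 - η (m + δ) ε₀) * (m + δ) := asymptoticRadius_midpoint_le hx hU hR hε₀ har hbr hεR
      _ ≤ (1 - η₀) * (m + δ) := by gcongr
      _ < m := by nlinarith [mul_pos hη₀ hδ]
  exact lt_irrefl m this

lemma cauchySeq_of_tendsto_asymptoticRadius (hx : IsBounded (range x)) (hU : H.UnifConvex η)
    (hmon : MonotoneModulus η) (hC : H.ConvexSet C) {m : ℝ}
    (hm : ∀ y ∈ C, m ≤ asymptoticRadius x y) {y : ℕ → X} (hyC : ∀ n, y n ∈ C)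
    (hy : Tendsto (fun n => asymptoticRadius x (y n)) atTop (𝓝 m)) : CauchySeq y := by
  refine Metric.cauchySeq_iff'.2 fun ε hε => ?_
  obtain ⟨δ, hδ, hclose⟩ :=
    exists_forall_dist_le_of_asymptoticRadius_lt hx hU hmon hC hm (half_pos hε)
  obtain ⟨N, hN⟩ :=
    eventually_atTop.1 (hy.eventually (eventually_lt_nhds (lt_add_of_pos_right m hδ)))
  exact ⟨N, fun n hn =>
    (hclose _ (hyC n) _ (hyC N) (hN n hn) (hN N le_rfl)).trans_lt (half_lt_self hε)⟩

lemma exists_isMinOn_asymptoticRadius [CompleteSpace X] (hx : IsBounded (range x))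
    (hU : H.UnifConvex η) (hmon : MonotoneModulus η) (hCne : C.Nonempty) (hCcl : IsClosed C)
    (hC : H.ConvexSet C) : ∃ c ∈ C, IsMinOn (asymptoticRadius x) C c := by
  have hbdd : BddBelow (asymptoticRadius x '' C) :=
    ⟨0, forall_mem_image.2 fun y _ => asymptoticRadius_nonneg hx y⟩
  set m := sInf (asymptoticRadius x '' C)
  have hm : ∀ y ∈ C, m ≤ asymptoticRadius x y := fun y hy => csInf_le hbdd (mem_image_of_mem _ hy)
  obtain ⟨u, -, hu, huC⟩ := exists_seq_tendsto_sInf (hCne.image _) hbdd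
  choose y hyC hyu using huC
  replace hu : Tendsto (fun n => asymptoticRadius x (y n)) atTop (𝓝 m) := by
    simpa only [hyu] using hu
  obtain ⟨c, hc⟩ := cauchySeq_tendsto_of_complete
    (cauchySeq_of_tendsto_asymptoticRadius hx hU hmon hC hm hyC hu)
  have hrc : asymptoticRadius x c = m :=
    tendsto_nhds_unique (((lipschitzWith_asymptoticRadius hx).continuous.tendsto c).comp hc) hu
  exact ⟨c, hCcl.mem_of_tendsto hc (Eventually.of_forall hyC),
    isMinOn_iff.2 fun z hz => hrc ▸ hm z hz⟩

lemma eq_of_isMinOn_asymptoticRadius (hx : IsBounded (range x)) (hU : H.UnifConvex η)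
    (hmon : MonotoneModulus η) (hC : H.ConvexSet C) {c c' : X} (hc : c ∈ C) (hc' : c' ∈ C)
    (hmin : IsMinOn (asymptoticRadius x) C c) (hmin' : IsMinOn (asymptoticRadius x) C c') :
    c = c' :=
  eq_of_forall_dist_le fun ε hε => by
    obtain ⟨δ, hδ, hclose⟩ :=
      exists_forall_dist_le_of_asymptoticRadius_lt hx hU hmon hC (isMinOn_iff.1 hmin) hε
    have hlt := lt_add_of_pos_right (asymptoticRadius x c) hδ
    exact hclose c hc c' hc' hlt ((isMinOn_iff.1 hmin' c hc).trans_lt hlt)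

end AsymptoticRadius

theorem stmt7 {X : Type*} [MetricSpace X] [CompleteSpace X] (H : WHyp X)
    (η : ℝ → ℝ → ℝ) (hU : H.UnifConvex η) (hmon : MonotoneModulus η)
    (C : Set X) (hCne : C.Nonempty) (hCcl : IsClosed C) (hCconv : H.ConvexSet C)
    (x : ℕ → X) (hbd : Bornology.IsBounded (Set.range x)) :
    ∃! c, c ∈ C ∧ ∀ y ∈ C,
      Filter.limsup (fun n => dist c (x n)) Filter.atTop ≤
        Filter.limsup (fun n => dist y (x n)) Filter.atTop := by
  obtain ⟨c, hc, hmin⟩ := exists_isMinOn_asymptoticRadius hbd hU hmon hCne hCcl hCconv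
  refine ⟨c, ⟨hc, isMinOn_iff.1 hmin⟩, fun c' ⟨hc', hmin'⟩ => ?_⟩
  exact (eq_of_isMinOn_asymptoticRadius hbd hU hmon hCconv hc hc' hmin (isMinOn_iff.2 hmin')).symm
end
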